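/- For every integer α, there exist a natural number k and a nonzero vector v ∈ ℝ^{k+1} such that H_k · v = α · v; that is, every integer occurs as an eigenvalue of the dimer hopping Hamiltonian restricted to some k-particle subspace, so the set of eigenvalues of the full hopping Hamiltonian is all of ℤ. -/
import Mathlib

open Matrix

/-- The dimer hopping matrix `H_k` restricted to the `k`-particle subspace:
a `(k+1) × (k+1)` symmetric tridiagonal matrix with off-diagonal entries
`√((α+1)(k−α))`. -/
noncomputable def hopH (k : ℕ) : Matrix (Fin (k+1)) (Fin (k+1)) ℝ :=
  fun α β =>
    if (α : ℕ) + 1 = (β : ℕ) then Real.sqrt ((((α : ℕ) + 1) * (k - (α : ℕ)) : ℕ))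
    else if (β : ℕ) + 1 = (α : ℕ) then Real.sqrt ((((β : ℕ) + 1) * (k - (β : ℕ)) : ℕ))
    else 0

lemma sqrt_nat_mul (a b : ℕ) :
    Real.sqrt (a : ℕ) * Real.sqrt (b : ℕ) = Real.sqrt ((a * b : ℕ)) := by
  push_cast
  rw [← Real.sqrt_mul (by positivity)]

lemma key1 (k j : ℕ) :
    Real.sqrt (((j+1)*(k-j) : ℕ)) * Real.sqrt ((k.choose (j+1) : ℕ))
      = ((k - j : ℕ) : ℝ) * Real.sqrt ((k.choose j : ℕ)) := by
  rw [sqrt_nat_mul]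
  have h := Nat.choose_succ_right_eq k j
  have hn : (j+1)*(k-j) * k.choose (j+1) = (k-j)^2 * k.choose j := by
    calc (j+1)*(k-j) * k.choose (j+1) = (k-j) * (k.choose (j+1) * (j+1)) := by ring
    _ = (k-j) * (k.choose j * (k-j)) := by rw [h]
    _ = (k-j)^2 * k.choose j := by ring
  rw [hn]
  push_cast
  rw [Real.sqrt_mul (by positivity), Real.sqrt_sq (by positivity)]

lemma key2 (k j : ℕ) :
    Real.sqrt (((j+1)*(k-j) : ℕ)) * Real.sqrt ((k.choose j : ℕ))
      = ((j + 1 : ℕ) : ℝ) * Real.sqrt ((k.choose (j+1) : ℕ)) := by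
  rw [sqrt_nat_mul]
  have h := Nat.choose_succ_right_eq k j
  have hn : (j+1)*(k-j) * k.choose j = (j+1)^2 * k.choose (j+1) := by
    calc (j+1)*(k-j) * k.choose j = (j+1) * (k.choose j * (k-j)) := by ring
    _ = (j+1) * (k.choose (j+1) * (j+1)) := by rw [h]
    _ = (j+1)^2 * k.choose (j+1) := by ring
  rw [hn]
  push_cast
  rw [Real.sqrt_mul (by positivity), Real.sqrt_sq (by positivity)]

/-- Every integer `α` occurs as an eigenvalue of the dimer hopping Hamiltonian
restricted to some `k`-particle subspace: the set of eigenvalues of the full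
hopping Hamiltonian is all of `ℤ`. -/
theorem every_int_is_eigenvalue (α : ℤ) :
    ∃ (k : ℕ) (v : Fin (k+1) → ℝ), v ≠ 0 ∧ hopH k *ᵥ v = (α : ℝ) • v := by
  set k := α.natAbs with hk
  set s : ℝ := if 0 ≤ α then 1 else -1 with hs
  have hs2 : s * s = 1 := by rcases le_or_gt 0 α with h | h <;> simp [hs, h, not_le.2]
  have hsk : s * k = (α : ℝ) := by
    rcases le_or_gt 0 α with h | h
    · have h1 : (k : ℝ) = α := by
        rw [hk, Nat.cast_natAbs]; exact_mod_cast abs_of_nonneg h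
      simp [hs, h, h1]
    · have h1 : (k : ℝ) = -α := by
        rw [hk, Nat.cast_natAbs]; exact_mod_cast abs_of_nonpos h.le
      simp [hs, not_le.2 h, h1]
  refine ⟨k, fun β => s ^ (β : ℕ) * Real.sqrt ((k.choose (β : ℕ) : ℕ)), ?_, ?_⟩
  · intro hv
    have h0 := congrFun hv ⟨0, Nat.succ_pos k⟩
    simp [Nat.choose_zero_right] at h0
  · funext β
    -- compute the matrix-vector product at index β
    have hmv : (hopH k *ᵥ fun β => s ^ (β : ℕ) * Real.sqrt ((k.choose (β : ℕ) : ℕ))) β =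
        (∑ γ : Fin (k+1), if (β:ℕ)+1 = (γ:ℕ) then
            Real.sqrt ((((β:ℕ)+1)*(k-(β:ℕ)) : ℕ)) * (s ^ (γ:ℕ) * Real.sqrt ((k.choose (γ:ℕ) : ℕ))) else 0)
      + (∑ γ : Fin (k+1), if (γ:ℕ)+1 = (β:ℕ) then
            Real.sqrt ((((γ:ℕ)+1)*(k-(γ:ℕ)) : ℕ)) * (s ^ (γ:ℕ) * Real.sqrt ((k.choose (γ:ℕ) : ℕ))) else 0) := by
      rw [mulVec, dotProduct, ← Finset.sum_add_distrib]
      refine Finset.sum_congr rfl fun γ _ => ?_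
      simp only [hopH]
      by_cases h1 : (β:ℕ)+1 = (γ:ℕ)
      · have h2 : ¬ ((γ:ℕ)+1 = (β:ℕ)) := by omega
        simp [h1, h2]
      · by_cases h2 : (γ:ℕ)+1 = (β:ℕ)
        · simp [h1, h2]
        · simp [h1, h2]
    rw [hmv]
    have hβk : (β:ℕ) ≤ k := Nat.lt_succ_iff.mp β.isLt
    -- first sum
    have hsum1 : (∑ γ : Fin (k+1), if (β:ℕ)+1 = (γ:ℕ) then
            Real.sqrt ((((β:ℕ)+1)*(k-(β:ℕ)) : ℕ)) * (s ^ (γ:ℕ) * Real.sqrt ((k.choose (γ:ℕ) : ℕ))) else 0)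
        = ((k - (β:ℕ) : ℕ) : ℝ) * (s ^ ((β:ℕ)+1) * Real.sqrt ((k.choose (β:ℕ) : ℕ))) := by
      by_cases hβ : (β:ℕ) < k
      · have := Finset.sum_eq_single (s := Finset.univ)
          (f := fun γ : Fin (k+1) => if (β:ℕ)+1 = (γ:ℕ) then
            Real.sqrt ((((β:ℕ)+1)*(k-(β:ℕ)) : ℕ)) * (s ^ (γ:ℕ) * Real.sqrt ((k.choose (γ:ℕ) : ℕ))) else 0)
          (⟨(β:ℕ)+1, by omega⟩ : Fin (k+1))
          (fun b _ hb => by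
            have : ¬ ((β:ℕ)+1 = (b:ℕ)) := fun hc => hb (Fin.ext (by simp [← hc]))
            simp [this])
          (fun h => absurd (Finset.mem_univ _) h)
        rw [this]
        simp only [if_pos rfl]
        have := key1 k (β:ℕ)
        calc Real.sqrt ((((β:ℕ)+1)*(k-(β:ℕ)) : ℕ)) * (s ^ ((β:ℕ)+1) * Real.sqrt ((k.choose ((β:ℕ)+1) : ℕ)))
            = s ^ ((β:ℕ)+1) * (Real.sqrt ((((β:ℕ)+1)*(k-(β:ℕ)) : ℕ)) * Real.sqrt ((k.choose ((β:ℕ)+1) : ℕ))) := by ring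
          _ = s ^ ((β:ℕ)+1) * (((k - (β:ℕ) : ℕ) : ℝ) * Real.sqrt ((k.choose (β:ℕ) : ℕ))) := by rw [this]
          _ = _ := by ring
      · have hβk' : (β:ℕ) = k := by omega
        rw [Finset.sum_eq_zero (fun γ _ => by
          have : ¬ ((β:ℕ)+1 = (γ:ℕ)) := by omega
          simp [this])]
        simp [hβk']
    -- second sum
    have hsum2 : (∑ γ : Fin (k+1), if (γ:ℕ)+1 = (β:ℕ) then
            Real.sqrt ((((γ:ℕ)+1)*(k-(γ:ℕ)) : ℕ)) * (s ^ (γ:ℕ) * Real.sqrt ((k.choose (γ:ℕ) : ℕ))) else 0)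
        = ((β:ℕ) : ℝ) * (s ^ ((β:ℕ)-1) * Real.sqrt ((k.choose (β:ℕ) : ℕ))) := by
      by_cases hβ : 0 < (β:ℕ)
      · have := Finset.sum_eq_single (s := Finset.univ)
          (f := fun γ : Fin (k+1) => if (γ:ℕ)+1 = (β:ℕ) then
            Real.sqrt ((((γ:ℕ)+1)*(k-(γ:ℕ)) : ℕ)) * (s ^ (γ:ℕ) * Real.sqrt ((k.choose (γ:ℕ) : ℕ))) else 0)
          (⟨(β:ℕ)-1, by omega⟩ : Fin (k+1))
          (fun b _ hb => by
            have : ¬ ((b:ℕ)+1 = (β:ℕ)) := fun hc => hb (Fin.ext (by simp; omega))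
            simp [this])
          (fun h => absurd (Finset.mem_univ _) h)
        rw [this]
        simp only [Fin.val_mk]
        have e1 : (β:ℕ)-1+1 = (β:ℕ) := by omega
        have hk2 := key2 k ((β:ℕ)-1)
        rw [e1] at hk2
        rw [e1, if_pos rfl]
        calc Real.sqrt ((((β:ℕ))*(k-((β:ℕ)-1)) : ℕ)) * (s ^ ((β:ℕ)-1) * Real.sqrt ((k.choose ((β:ℕ)-1) : ℕ)))
            = s ^ ((β:ℕ)-1) * (Real.sqrt ((((β:ℕ))*(k-((β:ℕ)-1)) : ℕ)) * Real.sqrt ((k.choose ((β:ℕ)-1) : ℕ))) := by ring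
          _ = s ^ ((β:ℕ)-1) * (((β:ℕ) : ℝ) * Real.sqrt ((k.choose (β:ℕ) : ℕ))) := by rw [hk2]
          _ = _ := by ring
      · have hβ0 : (β:ℕ) = 0 := by omega
        rw [Finset.sum_eq_zero (fun γ _ => by
          have : ¬ ((γ:ℕ)+1 = (β:ℕ)) := by omega
          simp [this])]
        simp [hβ0]
    rw [hsum1, hsum2]
    simp only [Pi.smul_apply, smul_eq_mul]
    by_cases hβ : 0 < (β:ℕ)
    · have e1 : s ^ ((β:ℕ)+1) = s * s ^ (β:ℕ) := by rw [pow_succ]; ring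
      have e2 : s ^ ((β:ℕ)-1) = s * s ^ (β:ℕ) := by
        obtain ⟨m, hm⟩ : ∃ m, (β:ℕ) = m + 1 := ⟨(β:ℕ)-1, by omega⟩
        rw [hm, Nat.add_sub_cancel, pow_succ]
        calc s ^ m = (s * s) * s ^ m := by rw [hs2]; ring
          _ = s * (s ^ m * s) := by ring
      rw [e1, e2]
      have ecast : ((k - (β:ℕ) : ℕ) : ℝ) = (k : ℝ) - ((β:ℕ) : ℝ) := by
        push_cast [Nat.cast_sub hβk]; ring
      rw [ecast, ← hsk]
      ring
    · have hβ0 : (β:ℕ) = 0 := by omega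
      simp only [hβ0]
      rw [← hsk]
      have : ((k - 0 : ℕ) : ℝ) = (k : ℝ) := by norm_num
      rw [this]
      push_cast
      ring
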